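/- Let ℋ be a complex Hilbert space with Hilbert (orthonormal) basis (f_j)_{j∈ℕ} and let ε : ℕ → ℝ be a function whose range is {E_n : n ∈ ℕ}, where E_1 < E_2 < ⋯ < 0 is a strictly increasing sequence of negative reals with lim_{n→∞} E_n = 0, and such that each fiber ε^{-1}({E_n}) is finite. Let K be the diagonal operator with domain D(K) = {φ ∈ ℋ : ∑_j ε(j)^{-2} |⟨f_j,φ⟩|² < ∞} acting by Kφ = ∑_j ε(j)^{-1} ⟨f_j,φ⟩ f_j. Then there exist a linear map T : 𝓕 → ℋ on 𝓕 := span{f_j : j ∈ ℕ} with ⟨Tφ,ψ⟩ = ⟨φ,Tψ⟩ for all φ,ψ ∈ 𝓕, and a dense subspace ℰ ⊆ 𝓕 such that for every ψ ∈ ℰ: Tψ ∈ D(K), Kψ ∈ 𝓕, and K(Tψ) − T(Kψ) = −iψ. -/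

import Mathlib

open scoped InnerProductSpace

/-- The action of the diagonal operator `diag(λ)`: `φ ↦ ∑_j λ_j ⟨f_j, φ⟩ f_j`. -/
noncomputable def diagOp {ℋ : Type*} [NormedAddCommGroup ℋ] [InnerProductSpace ℂ ℋ]
    (f : HilbertBasis ℕ ℂ ℋ) (lam : ℕ → ℝ) (φ : ℋ) : ℋ :=
  ∑' j : ℕ, ((lam j : ℂ) * ⟪f j, φ⟫_ℂ) • f j

/-- The domain `{φ : ∑_j λ_j² |⟨f_j, φ⟩|² < ∞}` of the diagonal operator `diag(λ)`. -/
def diagDom {ℋ : Type*} [NormedAddCommGroup ℋ] [InnerProductSpace ℂ ℋ]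
    (f : HilbertBasis ℕ ℂ ℋ) (lam : ℕ → ℝ) : Set ℋ :=
  {φ | Summable fun j : ℕ => (lam j) ^ 2 * ‖⟪f j, φ⟫_ℂ‖ ^ 2}

namespace TimeOp

open scoped ENNReal InnerProductSpace

/-- `|1/ε j|`. -/
noncomputable def A (ε : ℕ → ℝ) (j : ℕ) : ℝ := |(ε j)⁻¹|

/-- The choice of the next element, given the list `L` of previously picked elements. -/
noncomputable def pickNext (ε : ℕ → ℝ) (s : ℕ) (L : List ℕ) : ℕ :=
  if s.unpair.2 = 0 then sInf {j | j ∉ L}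
  else sInf {j | j ∉ L ∧
    2 * max 1 (A ε (L.getD (Nat.pair s.unpair.1 (s.unpair.2 - 1)) 0)) ≤ A ε j}

/-- The list of the first `s` picked elements. -/
noncomputable def picksList (ε : ℕ → ℝ) : ℕ → List ℕ
  | 0 => []
  | (s+1) => picksList ε s ++ [pickNext ε s (picksList ε s)]

/-- The `s`-th picked element. -/
noncomputable def pick (ε : ℕ → ℝ) (s : ℕ) : ℕ := pickNext ε s (picksList ε s)

theorem picksList_eq (ε : ℕ → ℝ) (s : ℕ) :
    picksList ε s = (List.range s).map (pick ε) := by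
  induction s with
  | zero => rfl
  | succ s ih =>
    rw [picksList, List.range_succ, List.map_append, ← ih]
    rfl

theorem mem_picksList {ε : ℕ → ℝ} {s j : ℕ} :
    j ∈ picksList ε s ↔ ∃ t < s, pick ε t = j := by
  simp [picksList_eq, List.mem_map, List.mem_range]

/-- The standing hypothesis on `ε`. -/
structure Nice (ε : ℕ → ℝ) : Prop where
  neg : ∀ j, ε j < 0
  big : ∀ (L : List ℕ) (R : ℝ), {j | j ∉ L ∧ R ≤ A ε j}.Nonempty

theorem Nice.Apos {ε : ℕ → ℝ} (h : Nice ε) (j : ℕ) : 0 < A ε j := by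
  have := h.neg j
  have : (ε j)⁻¹ < 0 := inv_lt_zero.2 this
  simpa [A] using abs_pos.2 (ne_of_lt this)

theorem pick_not_mem {ε : ℕ → ℝ} (h : Nice ε) (s : ℕ) :
    pick ε s ∉ picksList ε s := by
  rw [pick, pickNext]
  split
  · have hne : {j | j ∉ picksList ε s}.Nonempty := by
      obtain ⟨j, hj⟩ := h.big (picksList ε s) 0
      exact ⟨j, hj.1⟩
    exact Nat.sInf_mem hne
  · have hne := h.big (picksList ε s)
      (2 * max 1 (A ε ((picksList ε s).getD (Nat.pair s.unpair.1 (s.unpair.2 - 1)) 0)))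
    exact (Nat.sInf_mem hne).1

theorem pick_injective {ε : ℕ → ℝ} (h : Nice ε) : Function.Injective (pick ε) := by
  intro s t hst
  by_contra hne
  rcases Nat.lt_or_ge s t with hlt | hge
  · exact pick_not_mem h t (mem_picksList.2 ⟨s, hlt, hst⟩)
  · have hlt : t < s := lt_of_le_of_ne hge (Ne.symm hne)
    exact pick_not_mem h s (mem_picksList.2 ⟨t, hlt, hst.symm⟩)

theorem picksList_getD {ε : ℕ → ℝ} {t s : ℕ} (h : t < s) :
    (picksList ε s).getD t 0 = pick ε t := by
  rw [picksList_eq]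
  rw [List.getD_eq_getElem?_getD]
  simp [List.getElem?_map, List.getElem?_range, h]

/-- The elements of the `α`-th block. -/
noncomputable def e (ε : ℕ → ℝ) (α i : ℕ) : ℕ := pick ε (Nat.pair α i)

theorem pick_growth {ε : ℕ → ℝ} (h : Nice ε) (α i : ℕ) :
    2 * max 1 (A ε (e ε α i)) ≤ A ε (e ε α (i+1)) := by
  have hs : (Nat.pair α (i+1)).unpair.2 ≠ 0 := by simp [Nat.unpair_pair]
  have hne := h.big (picksList ε (Nat.pair α (i+1)))
    (2 * max 1 (A ε ((picksList ε (Nat.pair α (i+1))).getD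
      (Nat.pair (Nat.pair α (i+1)).unpair.1 ((Nat.pair α (i+1)).unpair.2 - 1)) 0)))
  have hmem := Nat.sInf_mem hne
  have hpe : pick ε (Nat.pair α (i+1)) = sInf {j | j ∉ picksList ε (Nat.pair α (i+1)) ∧
      2 * max 1 (A ε ((picksList ε (Nat.pair α (i+1))).getD
        (Nat.pair (Nat.pair α (i+1)).unpair.1 ((Nat.pair α (i+1)).unpair.2 - 1)) 0)) ≤ A ε j} := by
    rw [pick, pickNext, if_neg hs]
  have hlt : Nat.pair α i < Nat.pair α (i+1) := Nat.pair_lt_pair_right α (Nat.lt_succ_self i)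
  have hgetD : (picksList ε (Nat.pair α (i+1))).getD
      (Nat.pair (Nat.pair α (i+1)).unpair.1 ((Nat.pair α (i+1)).unpair.2 - 1)) 0
      = e ε α i := by
    rw [Nat.unpair_pair]
    simpa [e] using picksList_getD (ε := ε) hlt
  rw [← hpe] at hmem
  rw [hgetD] at hmem
  exact hmem.2

theorem pick_surjective {ε : ℕ → ℝ} (h : Nice ε) : Function.Surjective (pick ε) := by
  intro j₀
  by_contra hno
  push_neg at hno
  -- Let B := {j | ∀ s, pick ε s ≠ j}; j₀ ∈ B; let m := sInf B
  have hBne : {j | ∀ s, pick ε s ≠ j}.Nonempty := ⟨j₀, hno⟩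
  set m := sInf {j | ∀ s, pick ε s ≠ j} with hm
  have hmmem : ∀ s, pick ε s ≠ m := Nat.sInf_mem hBne
  have hsmall : ∀ j < m, ∃ s, pick ε s = j := by
    intro j hj
    by_contra hc
    push_neg at hc
    exact absurd (Nat.sInf_le (show j ∈ {j | ∀ s, pick ε s ≠ j} from hc)) (not_le.2 hj)
  -- choose a bound on steps
  choose step hstep using hsmall
  have hex : ∃ s₀, ∀ j (hj : j < m), step j hj < s₀ := by
    rcases Nat.eq_zero_or_pos m with h0 | hpos
    · exact ⟨1, fun j hj => by omega⟩
    · refine ⟨(Finset.range m).sup (fun j => if hj : j < m then step j hj + 1 else 0), ?_⟩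
      intro j hj
      have : step j hj + 1 ≤ _ := Finset.le_sup (f := fun j => if hj : j < m then step j hj + 1 else 0)
        (b := j) (Finset.mem_range.2 hj) |>.trans_eq' (by simp [hj])
      omega
  obtain ⟨s₀, hs₀⟩ := hex
  -- use step s := pair s₀ 0
  set s := Nat.pair s₀ 0 with hsdef
  have hs2 : s.unpair.2 = 0 := by simp [hsdef, Nat.unpair_pair]
  have hpick : pick ε s = sInf {j | j ∉ picksList ε s} := by
    rw [pick, pickNext, if_pos hs2]
  have hmem_set : m ∈ {j | j ∉ picksList ε s} := by
    intro hmem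
    obtain ⟨t, _, ht⟩ := mem_picksList.1 hmem
    exact hmmem t ht
  have hle : sInf {j | j ∉ picksList ε s} ≤ m := Nat.sInf_le hmem_set
  have hge : m ≤ sInf {j | j ∉ picksList ε s} := by
    by_contra hc
    push_neg at hc
    -- then sInf < m, so it was picked at step `step _`, but sInf ∉ picksList s
    have hinf_mem : sInf {j | j ∉ picksList ε s} ∈ {j | j ∉ picksList ε s} := by
      refine Nat.sInf_mem ⟨m, hmem_set⟩
    have hlt : sInf {j | j ∉ picksList ε s} < m := hc
    have := hstep _ hlt
    apply hinf_mem
    refine mem_picksList.2 ⟨step _ hlt, ?_, this⟩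
    calc step _ hlt < s₀ := hs₀ _ hlt
    _ ≤ Nat.pair s₀ 0 := Nat.left_le_pair s₀ 0
  exact hmmem s (by rw [hpick]; omega)


/-! ### Block index and position -/

/-- Step at which `j` is picked. -/
noncomputable def idx (ε : ℕ → ℝ) (j : ℕ) : ℕ := sInf {s | pick ε s = j}

theorem pick_idx {ε : ℕ → ℝ} (h : Nice ε) (j : ℕ) : pick ε (idx ε j) = j :=
  Nat.sInf_mem (pick_surjective h j)

theorem idx_pick {ε : ℕ → ℝ} (h : Nice ε) (s : ℕ) : idx ε (pick ε s) = s :=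
  pick_injective h (pick_idx h (pick ε s))

/-- Block of `j`. -/
noncomputable def blk (ε : ℕ → ℝ) (j : ℕ) : ℕ := (Nat.unpair (idx ε j)).1
/-- Position of `j` in its block. -/
noncomputable def pos (ε : ℕ → ℝ) (j : ℕ) : ℕ := (Nat.unpair (idx ε j)).2

theorem e_blk_pos {ε : ℕ → ℝ} (h : Nice ε) (j : ℕ) : e ε (blk ε j) (pos ε j) = j := by
  rw [e, blk, pos, Nat.pair_unpair, pick_idx h]

theorem blk_e {ε : ℕ → ℝ} (h : Nice ε) (α i : ℕ) : blk ε (e ε α i) = α := by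
  rw [blk, e, idx_pick h, Nat.unpair_pair]

theorem pos_e {ε : ℕ → ℝ} (h : Nice ε) (α i : ℕ) : pos ε (e ε α i) = i := by
  rw [pos, e, idx_pick h, Nat.unpair_pair]

theorem e_injective {ε : ℕ → ℝ} (h : Nice ε) (α : ℕ) : Function.Injective (e ε α) := by
  intro i i' hii
  have := congrArg (pos ε) hii
  rwa [pos_e h, pos_e h] at this

/-! ### Growth estimates along a block.  Abbreviate `a i = A ε (e ε α i)`. -/

section Growth

variable {ε : ℕ → ℝ} {α : ℕ}

theorem a_lt_succ (h : Nice ε) (α : ℕ) (i : ℕ) : A ε (e ε α i) < A ε (e ε α (i+1)) := by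
  have h1 := pick_growth h α i
  have h2 : A ε (e ε α i) < 2 * max 1 (A ε (e ε α i)) := by
    rcases le_total (A ε (e ε α i)) 1 with hle | hle
    · calc A ε (e ε α i) ≤ 1 := hle
      _ < 2 * max 1 (A ε (e ε α i)) := by
          have : (1:ℝ) ≤ max 1 (A ε (e ε α i)) := le_max_left _ _
          nlinarith
    · have hmax : max 1 (A ε (e ε α i)) = A ε (e ε α i) := max_eq_right hle
      rw [hmax]
      nlinarith [h.Apos (e ε α i)]
  linarith

theorem a_strictMono (h : Nice ε) (α : ℕ) : StrictMono (fun i => A ε (e ε α i)) :=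
  strictMono_nat_of_lt_succ (a_lt_succ h α)

theorem a_geom (h : Nice ε) (α : ℕ) {i i' : ℕ} (hii : i < i') :
    2 ^ (i' - i) * max 1 (A ε (e ε α i)) ≤ A ε (e ε α i') := by
  obtain ⟨d, rfl⟩ : ∃ d, i' = i + (d + 1) := ⟨i' - i - 1, by omega⟩
  induction d with
  | zero => simpa using pick_growth h α i
  | succ d ih =>
    have ih' := ih (by omega)
    have step := pick_growth h α (i + (d+1))
    have hmax : A ε (e ε α (i + (d+1))) ≤ max 1 (A ε (e ε α (i + (d+1)))) := le_max_right _ _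
    have h2 : 2 ^ (i + (d + 1) - i) = (2:ℝ) ^ (d+1) := by norm_num
    have h3 : 2 ^ (i + (d + 1 + 1) - i) = (2:ℝ) ^ (d+2) := by norm_num
    rw [h2] at ih'
    rw [h3]
    have : (2:ℝ) ^ (d+2) * max 1 (A ε (e ε α i)) = 2 * (2 ^ (d+1) * max 1 (A ε (e ε α i))) := by
      ring
    rw [this]
    have hi1 : i + (d + 1) + 1 = i + (d + 1 + 1) := by omega
    calc 2 * (2 ^ (d+1) * max 1 (A ε (e ε α i))) ≤ 2 * A ε (e ε α (i + (d+1))) := by linarith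
    _ ≤ 2 * max 1 (A ε (e ε α (i + (d+1)))) := by linarith
    _ ≤ A ε (e ε α (i + (d+1) + 1)) := by rw [hi1] at step ⊢; exact step

theorem a_gap (h : Nice ε) (α : ℕ) {i i' : ℕ} (hii : i < i') :
    max 1 (A ε (e ε α i)) ≤ A ε (e ε α i') - A ε (e ε α i) := by
  have hg := a_geom h α hii
  have h2 : (2:ℝ) ≤ 2 ^ (i' - i) := by
    calc (2:ℝ) = 2 ^ 1 := by norm_num
    _ ≤ 2 ^ (i' - i) := by
        apply pow_le_pow_right₀ (by norm_num)
        omega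
  have hA : A ε (e ε α i) ≤ max 1 (A ε (e ε α i)) := le_max_right _ _
  nlinarith [le_max_left (1:ℝ) (A ε (e ε α i))]

theorem a_gap_one (h : Nice ε) (α : ℕ) {i i' : ℕ} (hii : i ≠ i') :
    1 ≤ |A ε (e ε α i') - A ε (e ε α i)| := by
  rcases Nat.lt_or_ge i i' with hlt | hge
  · have := a_gap h α hlt
    have h1 : (1:ℝ) ≤ max 1 (A ε (e ε α i)) := le_max_left _ _
    rw [abs_of_nonneg (by linarith)]
    linarith
  · have hlt : i' < i := by omega
    have := a_gap h α hlt
    have h1 : (1:ℝ) ≤ max 1 (A ε (e ε α i')) := le_max_left _ _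
    rw [abs_of_nonpos (by linarith)]
    linarith

theorem a_half (h : Nice ε) (α : ℕ) {i i' : ℕ} (hii : i < i') :
    A ε (e ε α i') / 2 ≤ A ε (e ε α i') - A ε (e ε α i) := by
  have hg := a_geom h α hii
  have h2 : (2:ℝ) ≤ 2 ^ (i' - i) := by
    calc (2:ℝ) = 2 ^ 1 := by norm_num
    _ ≤ 2 ^ (i' - i) := by
        apply pow_le_pow_right₀ (by norm_num)
        omega
  have hA : A ε (e ε α i) ≤ max 1 (A ε (e ε α i)) := le_max_right _ _
  have hM : (0:ℝ) < max 1 (A ε (e ε α i)) := lt_of_lt_of_le one_pos (le_max_left _ _)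
  nlinarith

theorem a_pow (h : Nice ε) (α : ℕ) {i : ℕ} (hi : 1 ≤ i) : (2:ℝ) ^ i ≤ A ε (e ε α i) := by
  have := a_geom h α (show 0 < i by omega)
  have h1 : (1:ℝ) ≤ max 1 (A ε (e ε α 0)) := le_max_left _ _
  have h2 : (2:ℝ)^(i-0) = 2^i := by norm_num
  nlinarith [pow_pos (show (0:ℝ) < 2 by norm_num) i]

end Growth


/-! ### The matrix of the time operator -/

/-- The matrix entry `t_{kj} = i/(κ_k - κ_j)` for distinct `k,j` in the same block. -/
noncomputable def tm (ε : ℕ → ℝ) (k j : ℕ) : ℂ :=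
  if blk ε k = blk ε j ∧ k ≠ j then
    Complex.I / ((((ε k)⁻¹ : ℝ) : ℂ) - (((ε j)⁻¹ : ℝ) : ℂ)) else 0

theorem tm_self (ε : ℕ → ℝ) (k : ℕ) : tm ε k k = 0 := by simp [tm]

theorem tm_eq_zero_of_blk {ε : ℕ → ℝ} {k j : ℕ} (hblk : blk ε k ≠ blk ε j) :
    tm ε k j = 0 := by simp [tm, hblk]

theorem tm_conj (ε : ℕ → ℝ) (k j : ℕ) : (starRingEnd ℂ) (tm ε k j) = tm ε j k := by
  rcases eq_or_ne k j with rfl | hkj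
  · simp [tm_self]
  by_cases hblk : blk ε k = blk ε j
  · rw [tm, if_pos ⟨hblk, hkj⟩, tm, if_pos ⟨hblk.symm, hkj.symm⟩]
    rw [map_div₀, map_sub, Complex.conj_I, Complex.conj_ofReal, Complex.conj_ofReal]
    rw [show ((((ε j)⁻¹:ℝ):ℂ) - (((ε k)⁻¹:ℝ):ℂ)) = -(((((ε k)⁻¹:ℝ)):ℂ) - (((ε j)⁻¹:ℝ):ℂ)) by ring,
      div_neg, neg_div]
  · rw [tm_eq_zero_of_blk hblk, tm_eq_zero_of_blk (Ne.symm hblk), map_zero]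

theorem inv_eq_neg_A {ε : ℕ → ℝ} (h : Nice ε) (j : ℕ) : (ε j)⁻¹ = -(A ε j) := by
  have : (ε j)⁻¹ < 0 := inv_lt_zero.2 (h.neg j)
  rw [A, abs_of_neg this, neg_neg]

theorem tm_formula {ε : ℕ → ℝ} (h : Nice ε) {k j : ℕ} (hblk : blk ε k = blk ε j) (hkj : k ≠ j) :
    tm ε k j = Complex.I / (((A ε j - A ε k : ℝ)) : ℂ) := by
  rw [tm, if_pos ⟨hblk, hkj⟩, inv_eq_neg_A h, inv_eq_neg_A h]
  push_cast
  ring_nf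

theorem tm_norm {ε : ℕ → ℝ} (h : Nice ε) {k j : ℕ} (hblk : blk ε k = blk ε j) (hkj : k ≠ j) :
    ‖tm ε k j‖ = |A ε j - A ε k|⁻¹ := by
  rw [tm_formula h hblk hkj, norm_div, Complex.norm_I, Complex.norm_real, one_div,
    Real.norm_eq_abs]

/-! ### Summability tools -/

theorem summable_geom_tail {v : ℕ → ℝ} (C : ℝ) (m : ℕ)
    (hb : ∀ i, m ≤ i → |v i| ≤ C * (1/2)^i) : Summable v := by
  rw [← summable_nat_add_iff m]
  apply Summable.of_norm
  have hs : Summable (fun i : ℕ => (C * (1/2)^m) * (1/2)^i) :=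
    (summable_geometric_two).mul_left _
  apply Summable.of_nonneg_of_le (fun i => norm_nonneg _) (fun i => ?_) hs
  have := hb (i + m) (by omega)
  calc ‖v (i + m)‖ = |v (i + m)| := rfl
  _ ≤ C * (1/2)^(i+m) := this
  _ = C * (1/2)^m * (1/2)^i := by rw [pow_add]; ring

theorem summable_block {ε : ℕ → ℝ} (h : Nice ε) (α : ℕ) {F : ℕ → ℝ}
    (h0 : ∀ k, blk ε k ≠ α → F k = 0)
    (hs : Summable (fun i => F (e ε α i))) : Summable F := by
  refine (Function.Injective.summable_iff (e_injective h α) ?_).1 hs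
  intro k hk
  apply h0
  intro hblk
  exact hk ⟨pos ε k, by rw [← hblk]; exact e_blk_pos h k⟩

/-- The column of the matrix is square-summable. -/
theorem col_sq_summable {ε : ℕ → ℝ} (h : Nice ε) (j : ℕ) :
    Summable (fun k => ‖tm ε k j‖ ^ 2) := by
  set α := blk ε j with hα
  set i₀ := pos ε j with hi₀
  have hej : e ε α i₀ = j := e_blk_pos h j
  apply summable_block h α (fun k hk => by rw [tm_eq_zero_of_blk hk]; simp)
  apply summable_geom_tail (4 : ℝ) (i₀ + 1)
  intro i hi
  have hne : e ε α i ≠ j := by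
    rw [← hej]; intro hc; have := e_injective h α hc; omega
  have hblk : blk ε (e ε α i) = blk ε j := by rw [blk_e h, hα]
  rw [tm_norm h hblk hne, ← hej]
  have h1 : 1 ≤ i := by omega
  have hlt : i₀ < i := by omega
  have hhalf := a_half h α hlt
  have hpow := a_pow h α h1
  have hpos := h.Apos (e ε α i)
  have hpos0 := h.Apos (e ε α i₀)
  have hgap : A ε (e ε α i) / 2 ≤ A ε (e ε α i) - A ε (e ε α i₀) := hhalf
  have habs : |A ε (e ε α i₀) - A ε (e ε α i)| = A ε (e ε α i) - A ε (e ε α i₀) := by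
    rw [abs_sub_comm]
    apply abs_of_nonneg
    linarith
  rw [habs]
  have h2i : (0:ℝ) < 2^i := pow_pos (by norm_num) i
  have hAi : (2:ℝ)^i ≤ A ε (e ε α i) := hpow
  have hgap_pos : (0:ℝ) < A ε (e ε α i) - A ε (e ε α i₀) := by
    have : (0:ℝ) < A ε (e ε α i) / 2 := by linarith
    linarith
  have hb : (A ε (e ε α i) - A ε (e ε α i₀))⁻¹ ≤ 2 / (2:ℝ)^i := by
    rw [div_eq_mul_inv]
    have h1' : (A ε (e ε α i) - A ε (e ε α i₀))⁻¹ ≤ (A ε (e ε α i) / 2)⁻¹ := by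
      apply inv_anti₀ (by linarith) hgap
    have h2' : (A ε (e ε α i) / 2)⁻¹ = 2 / A ε (e ε α i) := by
      field_simp
    rw [h2'] at h1'
    calc (A ε (e ε α i) - A ε (e ε α i₀))⁻¹ ≤ 2 / A ε (e ε α i) := h1'
    _ ≤ 2 * ((2:ℝ)^i)⁻¹ := by
        rw [div_eq_mul_inv]
        gcongr
  have hnn : (0:ℝ) ≤ (A ε (e ε α i) - A ε (e ε α i₀))⁻¹ := by positivity
  rw [abs_of_nonneg (by positivity)]
  calc ((A ε (e ε α i) - A ε (e ε α i₀))⁻¹)^2 ≤ (2 / (2:ℝ)^i)^2 := by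
        apply pow_le_pow_left₀ hnn hb
  _ = 4 * ((1/2)^i)^2 := by
        rw [div_pow]
        rw [one_div, inv_pow]
        ring_nf
  _ ≤ 4 * (1/2)^i := by
        have h3 : ((1:ℝ)/2)^i ≤ 1 := by
          apply pow_le_one₀ <;> norm_num
        have h4 : (0:ℝ) ≤ ((1:ℝ)/2)^i := by positivity
        nlinarith


theorem norm_I_div_sub {x y : ℝ} (hx : x ≠ 0) (hy : y ≠ 0) :
    ‖Complex.I / (x:ℂ) - Complex.I / (y:ℂ)‖ = |y - x| / (|x| * |y|) := by
  have hx' : ((x:ℝ):ℂ) ≠ 0 := by exact_mod_cast hx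
  have hy' : ((y:ℝ):ℂ) ≠ 0 := by exact_mod_cast hy
  have heq : Complex.I / (x:ℂ) - Complex.I / (y:ℂ)
      = Complex.I * (((y - x:ℝ)):ℂ) / (((x:ℝ):ℂ) * ((y:ℝ):ℂ)) := by
    push_cast
    field_simp
  rw [heq, norm_div, norm_mul, Complex.norm_I, one_mul, norm_mul]
  rw [Complex.norm_real, Complex.norm_real, Complex.norm_real, Real.norm_eq_abs,
    Real.norm_eq_abs, Real.norm_eq_abs]

/-- Summability needed for `T(f p - f q) ∈ D(K)`. -/
theorem sum_ccr {ε : ℕ → ℝ} (h : Nice ε) (α : ℕ) {i₁ i₂ : ℕ} (h12 : i₁ ≠ i₂) :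
    Summable (fun k =>
      ((ε k)⁻¹)^2 * ‖tm ε k (e ε α i₁) - tm ε k (e ε α i₂)‖^2) := by
  set p := e ε α i₁ with hp
  set q := e ε α i₂ with hq
  apply summable_block h α (fun k hk => ?_)
  swap
  · have h1 : tm ε k p = 0 := tm_eq_zero_of_blk (by rwa [hp, blk_e h])
    have h2 : tm ε k q = 0 := tm_eq_zero_of_blk (by rwa [hq, blk_e h])
    rw [h1, h2]
    simp
  set D := (A ε q - A ε p)^2 with hD
  apply summable_geom_tail (16 * D) (max i₁ i₂ + 1)
  intro i hi
  have hi1 : i₁ < i := by omega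
  have hi2 : i₂ < i := by omega
  have h1 : 1 ≤ i := by omega
  set a := A ε (e ε α i) with ha
  set b₁ := A ε p with hb₁
  set b₂ := A ε q with hb₂
  have hne1 : e ε α i ≠ p := fun hc => by have := e_injective h α hc; omega
  have hne2 : e ε α i ≠ q := fun hc => by have := e_injective h α hc; omega
  have hblk1 : blk ε (e ε α i) = blk ε p := by rw [blk_e h, hp, blk_e h]
  have hblk2 : blk ε (e ε α i) = blk ε q := by rw [blk_e h, hq, blk_e h]
  rw [tm_formula h hblk1 hne1, tm_formula h hblk2 hne2]
  have hhalf1 : a / 2 ≤ a - b₁ := a_half h α hi1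
  have hhalf2 : a / 2 ≤ a - b₂ := a_half h α hi2
  have hapos : 0 < a := h.Apos _
  have hb1pos : 0 < b₁ := h.Apos _
  have hb2pos : 0 < b₂ := h.Apos _
  have hpow : (2:ℝ)^i ≤ a := a_pow h α h1
  have hx : b₁ - a ≠ 0 := by
    intro hc
    have : a / 2 ≤ 0 := by linarith
    linarith
  have hy : b₂ - a ≠ 0 := by
    intro hc
    have : a / 2 ≤ 0 := by linarith
    linarith
  rw [abs_of_nonneg (by positivity)]
  rw [norm_I_div_sub hx hy]
  have habs1 : |b₁ - a| = a - b₁ := by rw [abs_sub_comm]; apply abs_of_nonneg; linarith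
  have habs2 : |b₂ - a| = a - b₂ := by rw [abs_sub_comm]; apply abs_of_nonneg; linarith
  rw [habs1, habs2]
  have hκ : ((ε (e ε α i))⁻¹)^2 = a^2 := by rw [inv_eq_neg_A h]; ring
  rw [hκ]
  have hc : b₂ - a - (b₁ - a) = b₂ - b₁ := by ring
  rw [hc]
  have hgap1 : 0 < a - b₁ := by linarith
  have hgap2 : 0 < a - b₂ := by linarith
  have hgapq : a^2/4 ≤ (a-b₁)*(a-b₂) := by
    calc a^2/4 = (a/2)*(a/2) := by ring
    _ ≤ (a-b₁)*(a-b₂) := mul_le_mul hhalf1 hhalf2 (by linarith) (by linarith)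
  have ha4 : (0:ℝ) < a^2/4 := by positivity
  have h1' : (|b₂-b₁| / ((a-b₁)*(a-b₂)))^2 ≤ (|b₂-b₁| / (a^2/4))^2 := by
    apply pow_le_pow_left₀ (by positivity)
    exact div_le_div_of_nonneg_left (abs_nonneg _) ha4 hgapq
  have hane : a ≠ 0 := ne_of_gt hapos
  have hmain : a^2 * (|b₂-b₁| / (a^2/4))^2 = 16 * D / a^2 := by
    rw [div_pow, sq_abs, hD]
    field_simp
    ring
  have h2i : (0:ℝ) < 2^i := pow_pos (by norm_num) i
  have ha1 : (1:ℝ) ≤ a := le_trans (one_le_pow₀ (by norm_num)) hpow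
  have ha2 : (2:ℝ)^i ≤ a^2 := by nlinarith
  have hD0 : (0:ℝ) ≤ D := by rw [hD]; positivity
  calc a^2 * (|b₂-b₁| / ((a-b₁)*(a-b₂)))^2
      ≤ a^2 * (|b₂-b₁| / (a^2/4))^2 := mul_le_mul_of_nonneg_left h1' (sq_nonneg a)
  _ = 16 * D / a^2 := hmain
  _ ≤ 16 * D * (1/2)^i := by
      rw [div_eq_mul_inv, one_div, inv_pow]
      apply mul_le_mul_of_nonneg_left _ (by positivity)
      exact inv_anti₀ (by positivity) ha2



/-! ### The Hilbert space layer -/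

section Hilbert

variable {ℋ : Type*} [NormedAddCommGroup ℋ] [InnerProductSpace ℂ ℋ] [CompleteSpace ℋ]

theorem col_memlp {ε : ℕ → ℝ} (h : Nice ε) (j : ℕ) :
    Memℓp (fun k => tm ε k j) 2 := by
  apply memℓp_gen
  have he : ∀ k : ℕ, ‖tm ε k j‖ ^ ((2:ℝ≥0∞)).toReal = ‖tm ε k j‖^2 := fun k => by
    rw [show ((2:ℝ≥0∞)).toReal = ((2:ℕ):ℝ) by norm_num, Real.rpow_natCast]
  simp only [he]
  exact col_sq_summable h j

/-- The `j`-th column of the matrix as an `ℓ²` vector. -/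
noncomputable def col (ε : ℕ → ℝ) (h : Nice ε) (j : ℕ) : lp (fun _ : ℕ => ℂ) 2 :=
  ⟨fun k => tm ε k j, col_memlp h j⟩

@[simp] theorem col_apply {ε : ℕ → ℝ} (h : Nice ε) (j k : ℕ) :
    col ε h j k = tm ε k j := rfl

variable (f : HilbertBasis ℕ ℂ ℋ)

/-- The image of the `j`-th basis vector under the time operator. -/
noncomputable def gv {ε : ℕ → ℝ} (h : Nice ε) (j : ℕ) : ℋ := f.repr.symm (col ε h j)

theorem repr_gv {ε : ℕ → ℝ} (h : Nice ε) (j k : ℕ) :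
    f.repr (gv f h j) k = tm ε k j := by
  rw [gv, LinearIsometryEquiv.apply_symm_apply]
  rfl

open Classical in
/-- The time operator, extended linearly (via a Hamel basis) to all of `ℋ`. -/
noncomputable def Tmap {ε : ℕ → ℝ} (h : Nice ε) : ℋ →ₗ[ℂ] ℋ :=
  (Module.Basis.extend ((linearIndepOn_id_range_iff f.orthonormal.linearIndependent.injective).mpr
    f.orthonormal.linearIndependent)).constr ℂ
    (fun v => if hv : ∃ j, f j = (v : ℋ) then gv f h hv.choose else 0)

open Classical in
theorem Tmap_apply {ε : ℕ → ℝ} (h : Nice ε) (p : ℕ) :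
    Tmap f h (f p) = gv f h p := by
  have hli := f.orthonormal.linearIndependent
  have hmem : f p ∈ ((linearIndepOn_id_range_iff hli.injective).mpr hli).extend (Set.subset_univ _) :=
    ((linearIndepOn_id_range_iff hli.injective).mpr hli).subset_extend _ ⟨p, rfl⟩
  have key := (Module.Basis.extend ((linearIndepOn_id_range_iff hli.injective).mpr hli)).constr_basis (M' := ℋ) ℂ
    (fun v => if hv : ∃ j, f j = (v : ℋ) then gv f h hv.choose else 0) ⟨f p, hmem⟩
  rw [Module.Basis.extend_apply_self] at key
  have hex : ∃ j, f j = ((⟨f p, hmem⟩ : ((linearIndepOn_id_range_iff hli.injective).mpr hli).extend (Set.subset_univ _)) : ℋ) :=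
    ⟨p, rfl⟩
  rw [dif_pos hex] at key
  have hch : hex.choose = p := hli.injective hex.choose_spec
  rw [hch] at key
  exact key

/-! ### `diagOp` utilities -/

theorem diagOp_eq (lam : ℕ → ℝ) (φ : ℋ)
    (hm : Memℓp (fun k => ((lam k : ℝ) : ℂ) * f.repr φ k) 2) :
    diagOp f lam φ = f.repr.symm ⟨_, hm⟩ := by
  have hfun : (fun j => (((lam j : ℝ):ℂ) * ⟪f j, φ⟫_ℂ) • f j)
      = fun j => ((⟨_, hm⟩ : lp (fun _ : ℕ => ℂ) 2) j • f j) := by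
    funext j
    congr 2
    rw [← f.repr_apply_apply]
  rw [diagOp, hfun]
  exact (f.hasSum_repr_symm _).tsum_eq

theorem diagOp_single (lam : ℕ → ℝ) (p : ℕ) :
    diagOp f lam (f p) = ((lam p : ℝ):ℂ) • f p := by
  rw [diagOp, tsum_eq_single p ?_]
  · have h1 : ⟪f p, f p⟫_ℂ = 1 := by
      simpa using orthonormal_iff_ite.1 f.orthonormal p p
    rw [h1, mul_one]
  · intro b hb
    have : ⟪f b, f p⟫_ℂ = 0 := f.orthonormal.2 hb
    rw [this, mul_zero, zero_smul]

/-- The key summability predicate. -/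
def Q (lam : ℕ → ℝ) (φ : ℋ) : Prop :=
  Memℓp (fun k => ((lam k : ℝ):ℂ) * f.repr φ k) 2

theorem Q_zero (lam : ℕ → ℝ) : Q f lam 0 := by
  have : (fun k => ((lam k : ℝ):ℂ) * f.repr (0 : ℋ) k) = 0 := by
    funext k
    simp
  rw [Q, this]
  exact zero_memℓp

theorem Q_add {lam : ℕ → ℝ} {φ ψ : ℋ} (hφ : Q f lam φ) (hψ : Q f lam ψ) :
    Q f lam (φ + ψ) := by
  have : (fun k => ((lam k : ℝ):ℂ) * f.repr (φ + ψ) k)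
      = (fun k => ((lam k : ℝ):ℂ) * f.repr φ k) + (fun k => ((lam k : ℝ):ℂ) * f.repr ψ k) := by
    funext k
    simp [map_add, lp.coeFn_add, mul_add]
  rw [Q, this]
  exact hφ.add hψ

theorem Q_smul {lam : ℕ → ℝ} {φ : ℋ} (c : ℂ) (hφ : Q f lam φ) :
    Q f lam (c • φ) := by
  have : (fun k => ((lam k : ℝ):ℂ) * f.repr (c • φ) k)
      = c • (fun k => ((lam k : ℝ):ℂ) * f.repr φ k) := by
    funext k
    simp only [map_smul, lp.coeFn_smul, Pi.smul_apply, smul_eq_mul]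
    ring
  rw [Q, this]
  exact hφ.const_smul c

theorem Q_of_finite {lam : ℕ → ℝ} {φ : ℋ} (s : Finset ℕ)
    (hs : ∀ k ∉ s, f.repr φ k = 0) : Q f lam φ := by
  apply memℓp_gen
  apply summable_of_ne_finset_zero (s := s)
  intro k hk
  rw [hs k hk, mul_zero]
  simp

theorem diagOp_add (lam : ℕ → ℝ) {φ ψ : ℋ} (hφ : Q f lam φ) (hψ : Q f lam ψ) :
    diagOp f lam (φ + ψ) = diagOp f lam φ + diagOp f lam ψ := by
  rw [diagOp_eq f lam φ hφ, diagOp_eq f lam ψ hψ, diagOp_eq f lam (φ + ψ) (Q_add f hφ hψ),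
    ← map_add]
  congr 1
  apply lp.ext
  funext k
  simp [lp.coeFn_add, map_add, mul_add]
  rfl

theorem diagOp_smul (lam : ℕ → ℝ) {φ : ℋ} (c : ℂ) (hφ : Q f lam φ) :
    diagOp f lam (c • φ) = c • diagOp f lam φ := by
  rw [diagOp_eq f lam φ hφ, diagOp_eq f lam (c • φ) (Q_smul f c hφ), ← map_smul]
  congr 1
  apply lp.ext
  funext k
  simp only [lp.coeFn_smul, Pi.smul_apply, map_smul, smul_eq_mul]
  ring

theorem Q_iff_diagDom (lam : ℕ → ℝ) (φ : ℋ) (hφ : Q f lam φ) :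
    φ ∈ diagDom f lam := by
  rw [diagDom, Set.mem_setOf_eq]
  have hsum := hφ.summable (by norm_num : 0 < ((2:ℝ≥0∞)).toReal)
  have he : ∀ k : ℕ, ‖((lam k : ℝ):ℂ) * f.repr φ k‖ ^ ((2:ℝ≥0∞)).toReal
      = (lam k)^2 * ‖⟪f k, φ⟫_ℂ‖^2 := fun k => by
    rw [show ((2:ℝ≥0∞)).toReal = ((2:ℕ):ℝ) by norm_num, Real.rpow_natCast, norm_mul,
      mul_pow, Complex.norm_real, Real.norm_eq_abs, sq_abs, ← f.repr_apply_apply]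
  simp only [he] at hsum
  exact hsum


theorem repr_basis (p k : ℕ) : f.repr (f p) k = if k = p then 1 else 0 := by
  classical
  rw [f.repr_self]
  by_cases hk : k = p
  · subst hk; rw [lp.single_apply_self, if_pos rfl]
  · rw [lp.single_apply_ne _ _ _ hk, if_neg hk]

theorem Q_basis (lam : ℕ → ℝ) (p : ℕ) : Q f lam (f p) := by
  apply Q_of_finite f {p}
  intro k hk
  rw [repr_basis, if_neg (by simpa using hk)]

theorem Q_sub {lam : ℕ → ℝ} {φ ψ : ℋ} (hφ : Q f lam φ) (hψ : Q f lam ψ) :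
    Q f lam (φ - ψ) := by
  rw [sub_eq_add_neg, ← neg_one_smul ℂ ψ]
  exact Q_add f hφ (Q_smul f (-1) hψ)

theorem diagOp_sub (lam : ℕ → ℝ) {φ ψ : ℋ} (hφ : Q f lam φ) (hψ : Q f lam ψ) :
    diagOp f lam (φ - ψ) = diagOp f lam φ - diagOp f lam ψ := by
  rw [sub_eq_add_neg, ← neg_one_smul ℂ ψ, diagOp_add f lam hφ (Q_smul f (-1) hψ),
    diagOp_smul f lam (-1) hψ, neg_one_smul, ← sub_eq_add_neg]

/-- `κ`-values at distinct positions of a block are distinct. -/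
theorem kappa_ne {ε : ℕ → ℝ} (h : Nice ε) {α i i' : ℕ} (hne : i ≠ i') :
    ((ε (e ε α i))⁻¹ : ℝ) ≠ (ε (e ε α i'))⁻¹ := by
  rw [inv_eq_neg_A h, inv_eq_neg_A h]
  intro hc
  exact hne ((a_strictMono h α).injective (by linarith [neg_injective hc]))

theorem Q_gv_sub {ε : ℕ → ℝ} (h : Nice ε) {α i₁ i₂ : ℕ} (h12 : i₁ ≠ i₂) :
    Q f (fun j => (ε j)⁻¹) (gv f h (e ε α i₁) - gv f h (e ε α i₂)) := by
  rw [Q]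
  apply memℓp_gen
  have he : ∀ k : ℕ, ‖((((ε k)⁻¹:ℝ)):ℂ) * f.repr (gv f h (e ε α i₁) - gv f h (e ε α i₂)) k‖
        ^ ((2:ℝ≥0∞)).toReal
      = ((ε k)⁻¹)^2 * ‖tm ε k (e ε α i₁) - tm ε k (e ε α i₂)‖^2 := fun k => by
    rw [show ((2:ℝ≥0∞)).toReal = ((2:ℕ):ℝ) by norm_num, Real.rpow_natCast, map_sub,
      lp.coeFn_sub, Pi.sub_apply, repr_gv, repr_gv, norm_mul, mul_pow, Complex.norm_real,
      Real.norm_eq_abs, sq_abs]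
  simp only [he]
  exact sum_ccr h α h12

theorem alg1 {x y : ℂ} (hxy : x ≠ y) :
    x * (0 - Complex.I/(x-y)) - (x*0 - y*(Complex.I/(x-y))) = -Complex.I * (1-0) := by
  have hd : x - y ≠ 0 := sub_ne_zero.2 hxy
  field_simp
  ring

theorem alg2 {x y : ℂ} (hxy : x ≠ y) :
    y * (Complex.I/(y-x) - 0) - (x*(Complex.I/(y-x)) - y*0) = -Complex.I * (0-1) := by
  have hd : y - x ≠ 0 := sub_ne_zero.2 (Ne.symm hxy)
  field_simp
  ring

theorem alg3 {x y z : ℂ} (hzx : z ≠ x) (hzy : z ≠ y) :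
    z * (Complex.I/(z-x) - Complex.I/(z-y)) - (x*(Complex.I/(z-x)) - y*(Complex.I/(z-y)))
      = -Complex.I * (0-0) := by
  have hd1 : z - x ≠ 0 := sub_ne_zero.2 hzx
  have hd2 : z - y ≠ 0 := sub_ne_zero.2 hzy
  field_simp
  ring

/-- The coefficientwise commutation identity. -/
theorem coeff_identity {ε : ℕ → ℝ} (h : Nice ε) {α i₁ i₂ : ℕ} (h12 : i₁ ≠ i₂) (k : ℕ) :
    ((((ε k)⁻¹:ℝ)):ℂ) * (tm ε k (e ε α i₁) - tm ε k (e ε α i₂))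
      - (((((ε (e ε α i₁))⁻¹:ℝ)):ℂ) * tm ε k (e ε α i₁)
         - ((((ε (e ε α i₂))⁻¹:ℝ)):ℂ) * tm ε k (e ε α i₂))
    = -Complex.I * ((if k = e ε α i₁ then 1 else 0) - (if k = e ε α i₂ then 1 else 0)) := by
  set p := e ε α i₁ with hp
  set q := e ε α i₂ with hq
  have hpq : p ≠ q := fun hc => h12 (e_injective h α hc)
  have hκpq : ((((ε p)⁻¹:ℝ)):ℂ) ≠ (((ε q)⁻¹:ℝ):ℂ) := by
    exact_mod_cast kappa_ne h h12
  by_cases hkp : k = p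
  · rw [hkp, tm_self, if_pos rfl, if_neg hpq]
    have hblk : blk ε p = blk ε q := by rw [hp, hq, blk_e h, blk_e h]
    simp only [tm, if_pos (show blk ε p = blk ε q ∧ p ≠ q from ⟨hblk, hpq⟩)]
    exact alg1 hκpq
  · by_cases hkq : k = q
    · rw [hkq, tm_self, if_neg (fun hc => hpq hc.symm), if_pos rfl]
      have hblk : blk ε q = blk ε p := by rw [hp, hq, blk_e h, blk_e h]
      simp only [tm, if_pos (show blk ε q = blk ε p ∧ q ≠ p from ⟨hblk, fun hc => hpq hc.symm⟩)]
      exact alg2 hκpq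
    · rw [if_neg hkp, if_neg hkq]
      by_cases hblk : blk ε k = α
      · have hke : e ε α (pos ε k) = k := by rw [← hblk]; exact e_blk_pos h k
        have hblkp : blk ε k = blk ε p := by rw [hblk, hp, blk_e h]
        have hblkq : blk ε k = blk ε q := by rw [hblk, hq, blk_e h]
        have hκkp : ((((ε k)⁻¹:ℝ)):ℂ) ≠ (((ε p)⁻¹:ℝ):ℂ) := by
          rw [← hke]
          exact_mod_cast kappa_ne h (fun hc => hkp (by rw [← hke, hc, hp]))
        have hκkq : ((((ε k)⁻¹:ℝ)):ℂ) ≠ (((ε q)⁻¹:ℝ):ℂ) := by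
          rw [← hke]
          exact_mod_cast kappa_ne h (fun hc => hkq (by rw [← hke, hc, hq]))
        simp only [tm, if_pos (show blk ε k = blk ε p ∧ k ≠ p from ⟨hblkp, hkp⟩),
          if_pos (show blk ε k = blk ε q ∧ k ≠ q from ⟨hblkq, hkq⟩)]
        exact alg3 hκkp hκkq
      · have h1 : tm ε k p = 0 := tm_eq_zero_of_blk (by rw [hp, blk_e h]; exact hblk)
        have h2 : tm ε k q = 0 := tm_eq_zero_of_blk (by rw [hq, blk_e h]; exact hblk)
        rw [h1, h2]
        ring

/-- The base case of the commutation relation. -/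
theorem base_identity {ε : ℕ → ℝ} (h : Nice ε) {α i₁ i₂ : ℕ} (h12 : i₁ ≠ i₂) :
    diagOp f (fun j => (ε j)⁻¹) (Tmap f h (f (e ε α i₁) - f (e ε α i₂)))
      - Tmap f h (diagOp f (fun j => (ε j)⁻¹) (f (e ε α i₁) - f (e ε α i₂)))
    = -Complex.I • (f (e ε α i₁) - f (e ε α i₂)) := by
  set lam : ℕ → ℝ := fun j => (ε j)⁻¹ with hlam
  set p := e ε α i₁ with hp
  set q := e ε α i₂ with hq
  have hTψ : Tmap f h (f p - f q) = gv f h p - gv f h q := by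
    rw [map_sub, Tmap_apply, Tmap_apply]
  have hQT : Q f lam (gv f h p - gv f h q) := Q_gv_sub f h h12
  have hdiagψ : diagOp f lam (f p - f q)
      = ((lam p : ℝ):ℂ) • f p - ((lam q : ℝ):ℂ) • f q := by
    rw [diagOp_sub f lam (Q_basis f lam p) (Q_basis f lam q), diagOp_single, diagOp_single]
  have hTdiag : Tmap f h (((lam p : ℝ):ℂ) • f p - ((lam q : ℝ):ℂ) • f q)
      = ((lam p : ℝ):ℂ) • gv f h p - ((lam q : ℝ):ℂ) • gv f h q := by
    rw [map_sub, map_smul, map_smul, Tmap_apply, Tmap_apply]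
  rw [hTψ, hdiagψ, diagOp_eq f lam _ hQT, hTdiag]
  have h1 : ((lam p : ℝ):ℂ) • gv f h p - ((lam q : ℝ):ℂ) • gv f h q
      = f.repr.symm (((lam p : ℝ):ℂ) • col ε h p - ((lam q : ℝ):ℂ) • col ε h q) := by
    rw [map_sub, map_smul, map_smul]
    rfl
  have h2 : -Complex.I • (f p - f q)
      = f.repr.symm (-Complex.I • (f.repr (f p) - f.repr (f q))) := by
    rw [map_smul, map_sub, f.repr.symm_apply_apply, f.repr.symm_apply_apply]
  rw [h1, h2, ← map_sub]
  apply congrArg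
  apply lp.ext
  funext k
  simp only [lp.coeFn_sub, lp.coeFn_smul, Pi.sub_apply, Pi.smul_apply, smul_eq_mul]
  have hrepr : f.repr (gv f h p - gv f h q) k = tm ε k p - tm ε k q := by
    rw [map_sub, lp.coeFn_sub, Pi.sub_apply, repr_gv, repr_gv]
  rw [hrepr, col_apply, col_apply]
  simp only [repr_basis]
  convert coeff_identity h h12 k using 2 <;>
  · first
      | (by_cases hkk : k = p
         · simp [lp.single_apply, hkk]
         · simp [lp.single_apply, hkk])
      | (by_cases hkk : k = q
         · simp [lp.single_apply, hkk]
         · simp [lp.single_apply, hkk])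


theorem diagOp_zero (lam : ℕ → ℝ) : diagOp f lam (0:ℋ) = 0 := by
  rw [diagOp_eq f lam 0 (Q_zero f lam)]
  have : (⟨fun k => ((lam k : ℝ):ℂ) * f.repr (0:ℋ) k, Q_zero f lam⟩ :
      lp (fun _ : ℕ => ℂ) 2) = 0 := by
    apply lp.ext
    funext k
    simp
  rw [this, map_zero]

theorem Tmap_symm {ε : ℕ → ℝ} (h : Nice ε) (φ ψ : ℋ)
    (hφ : φ ∈ Submodule.span ℂ (Set.range f)) (hψ : ψ ∈ Submodule.span ℂ (Set.range f)) :
    ⟪Tmap f h φ, ψ⟫_ℂ = ⟪φ, Tmap f h ψ⟫_ℂ := by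
  induction hφ using Submodule.span_induction with
  | mem x hx =>
    obtain ⟨p, rfl⟩ := hx
    induction hψ using Submodule.span_induction with
    | mem y hy =>
      obtain ⟨q, rfl⟩ := hy
      have h1 : ⟪Tmap f h (f p), f q⟫_ℂ = (starRingEnd ℂ) ⟪f q, Tmap f h (f p)⟫_ℂ :=
        (inner_conj_symm _ _).symm
      have h2 : ⟪f q, Tmap f h (f p)⟫_ℂ = tm ε q p := by
        rw [Tmap_apply, ← f.repr_apply_apply, repr_gv]
      have h3 : ⟪f p, Tmap f h (f q)⟫_ℂ = tm ε p q := by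
        rw [Tmap_apply, ← f.repr_apply_apply, repr_gv]
      rw [h1, h2, h3, tm_conj]
    | zero => simp
    | add y z hy hz ihy ihz => rw [map_add, inner_add_right, inner_add_right, ihy, ihz]
    | smul c y hy ihy => rw [map_smul, inner_smul_right, inner_smul_right, ihy]
  | zero => simp
  | add x y hx hy ihx ihy => rw [map_add, inner_add_left, inner_add_left, ihx, ihy]
  | smul c x hx ihx => rw [map_smul, inner_smul_left, inner_smul_left, ihx]

theorem basis_mem_closure {ε : ℕ → ℝ} (h : Nice ε) (α i : ℕ) :
    f (e ε α i) ∈ closure ((Submodule.span ℂ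
      {ψ : ℋ | ∃ β l l', l ≠ l' ∧ ψ = f (e ε β l) - f (e ε β l')} : Submodule ℂ ℋ) : Set ℋ) := by
  set ES := Submodule.span ℂ
      {ψ : ℋ | ∃ β l l', l ≠ l' ∧ ψ = f (e ε β l) - f (e ε β l')} with hES
  rw [Metric.mem_closure_iff]
  intro δ hδ
  obtain ⟨N₀, hN₀⟩ := exists_nat_gt (δ⁻¹^2)
  set N := N₀ + 1 with hNdef
  have hN : (δ⁻¹^2) < (N:ℝ) := by
    calc (δ⁻¹^2) < (N₀:ℝ) := hN₀
    _ ≤ (N:ℝ) := by exact_mod_cast Nat.le_succ N₀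
  have hNpos : (0:ℝ) < (N:ℝ) := by positivity
  have hNne : (N:ℂ) ≠ 0 := Nat.cast_ne_zero.2 (by omega)
  set v := ∑ d ∈ Finset.range N, f (e ε α (i + 1 + d)) with hv
  refine ⟨f (e ε α i) - ((N:ℂ))⁻¹ • v, ?_, ?_⟩
  · -- membership in the span
    have hkey : f (e ε α i) - ((N:ℂ))⁻¹ • v
        = (N:ℂ)⁻¹ • ∑ d ∈ Finset.range N, (f (e ε α i) - f (e ε α (i+1+d))) := by
      rw [Finset.sum_sub_distrib, Finset.sum_const, Finset.card_range, smul_sub]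
      congr 1
      rw [← Nat.cast_smul_eq_nsmul ℂ N (f (e ε α i)), smul_smul, inv_mul_cancel₀ hNne, one_smul]
    rw [hkey]
    refine Submodule.smul_mem _ _ (Submodule.sum_mem _ (fun d _ => ?_))
    exact Submodule.subset_span ⟨α, i, i+1+d, by omega, rfl⟩
  · rw [dist_eq_norm, sub_sub_cancel, norm_smul]
    have horth : Orthonormal ℂ (fun d : ℕ => f (e ε α (i + 1 + d))) := by
      apply f.orthonormal.comp
      intro d d' hdd
      have := e_injective h α hdd
      omega
    have hvv : ⟪v, v⟫_ℂ = (N:ℂ) := by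
      rw [hv]
      have hh := horth.inner_sum (fun _ => (1:ℂ)) (fun _ => (1:ℂ)) (Finset.range N)
      simpa using hh
    have hnorm2 : ‖v‖^2 = (N:ℝ) := by
      have h2 := norm_sq_eq_re_inner (𝕜 := ℂ) v
      rw [hvv] at h2
      simpa using h2
    have hnormv : ‖v‖ = Real.sqrt N := by
      rw [← hnorm2, Real.sqrt_sq (norm_nonneg _)]
    have hNnorm : ‖((N:ℂ))⁻¹‖ = ((N:ℝ))⁻¹ := by
      rw [norm_inv]
      congr 1
      exact_mod_cast Complex.norm_natCast N
    rw [hnormv, hNnorm]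
    have hsqrtpos : 0 < Real.sqrt N := Real.sqrt_pos.2 hNpos
    have h1 : (N:ℝ)⁻¹ * Real.sqrt N = (Real.sqrt N)⁻¹ := by
      rw [show (N:ℝ) = Real.sqrt N * Real.sqrt N from (Real.mul_self_sqrt (le_of_lt hNpos)).symm]
      field_simp
      rw [Real.sqrt_sq hsqrtpos.le]
    rw [h1]
    have hsq : δ⁻¹ < Real.sqrt N := by
      have := Real.sqrt_lt_sqrt (by positivity) hN
      rwa [Real.sqrt_sq (by positivity)] at this
    have := inv_strictAnti₀ (by positivity) hsq
    rwa [inv_inv] at this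

theorem gen_dense {ε : ℕ → ℝ} (h : Nice ε) :
    Dense ((Submodule.span ℂ
      {ψ : ℋ | ∃ β l l', l ≠ l' ∧ ψ = f (e ε β l) - f (e ε β l')} : Submodule ℂ ℋ) : Set ℋ) := by
  set ES := Submodule.span ℂ
      {ψ : ℋ | ∃ β l l', l ≠ l' ∧ ψ = f (e ε β l) - f (e ε β l')} with hES
  have hsub : Submodule.span ℂ (Set.range f) ≤ ES.topologicalClosure := by
    rw [Submodule.span_le]
    rintro x ⟨p, rfl⟩
    have h1 : f p = f (e ε (blk ε p) (pos ε p)) := by rw [e_blk_pos h]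
    have h2 := basis_mem_closure f h (blk ε p) (pos ε p)
    rw [← h1] at h2
    exact h2
  have htop : ES.topologicalClosure = ⊤ := by
    apply le_antisymm le_top
    calc (⊤ : Submodule ℂ ℋ) = (Submodule.span ℂ (Set.range f)).topologicalClosure :=
          f.dense_span.symm
    _ ≤ ES.topologicalClosure :=
          Submodule.topologicalClosure_minimal _ hsub ES.isClosed_topologicalClosure
  exact Submodule.dense_iff_topologicalClosure_eq_top.2 htop

end Hilbert

theorem nice_of_hyps {ε E : ℕ → ℝ} (hmono : StrictMono E) (hneg : ∀ n, E n < 0)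
    (hlim : Filter.Tendsto E Filter.atTop (nhds 0))
    (hrange : Set.range ε = Set.range E) : Nice ε := by
  have hneg' : ∀ j, ε j < 0 := fun j => by
    have hmem : ε j ∈ Set.range E := by rw [← hrange]; exact ⟨j, rfl⟩
    obtain ⟨n, hn⟩ := hmem
    rw [← hn]; exact hneg n
  refine ⟨hneg', ?_⟩
  intro L R
  set R' := max R 1 with hR'def
  have hR' : (0:ℝ) < R' := lt_of_lt_of_le one_pos (le_max_right _ _)
  obtain ⟨n₀, hn₀⟩ := Metric.tendsto_atTop.1 hlim (R'⁻¹) (by positivity)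
  have hfiber : ∀ n : ℕ, ∃ j, ε j = E n := fun n => by
    have : E n ∈ Set.range ε := by rw [hrange]; exact ⟨n, rfl⟩
    exact this
  choose w hw using hfiber
  have hwinj : Function.Injective (fun m : ℕ => w (n₀ + m)) := by
    intro m m' hmm'
    have hEE : E (n₀ + m) = E (n₀ + m') := by
      rw [← hw (n₀ + m), ← hw (n₀ + m')]
      exact congrArg ε hmm'
    have := hmono.injective hEE
    omega
  have hS : (Set.range (fun m : ℕ => w (n₀ + m))).Infinite :=
    Set.infinite_range_of_injective hwinj
  have hsub2 : Set.range (fun m : ℕ => w (n₀ + m)) ⊆ {j | R ≤ A ε j} := by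
    rintro _ ⟨m, rfl⟩
    have hEn := hn₀ (n₀ + m) (by omega)
    rw [Real.dist_eq, sub_zero] at hEn
    have hEneg : E (n₀+m) < 0 := hneg _
    have habs : (0:ℝ) < |E (n₀+m)| := abs_pos.2 (ne_of_lt hEneg)
    have hA : A ε (w (n₀+m)) = |E (n₀+m)|⁻¹ := by rw [A, hw, abs_inv]
    rw [Set.mem_setOf_eq, hA]
    have hlt : R' < |E (n₀+m)|⁻¹ := by
      have := inv_strictAnti₀ habs hEn
      rwa [inv_inv] at this
    calc R ≤ R' := le_max_left _ _
    _ ≤ |E (n₀+m)|⁻¹ := le_of_lt hlt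
  have hdiff : ((Set.range (fun m : ℕ => w (n₀ + m))) \ {j | j ∈ L}).Nonempty :=
    (hS.diff (L.finite_toSet)).nonempty
  obtain ⟨j, hj1, hj2⟩ := hdiff
  exact ⟨j, hj2, hsub2 hj1⟩

end TimeOp

open TimeOp in
/-- existence of a time operator of `H⁻¹ = diag(1/ε(j))` when the
eigenvalues `ε(j)` run (with finite multiplicities) through a strictly increasing
sequence `E_1 < E_2 < ⋯ < 0` tending to `0`; no square-summability condition is imposed. -/
theorem exists_time_operator_of_inverse
    {ℋ : Type*} [NormedAddCommGroup ℋ] [InnerProductSpace ℂ ℋ] [CompleteSpace ℋ]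
    (f : HilbertBasis ℕ ℂ ℋ) (ε : ℕ → ℝ) (E : ℕ → ℝ)
    (hmono : StrictMono E) (hneg : ∀ n, E n < 0)
    (hlim : Filter.Tendsto E Filter.atTop (nhds 0))
    (hrange : Set.range ε = Set.range E)
    (hfib : ∀ n : ℕ, (ε ⁻¹' {E n}).Finite) :
    ∃ (T : ℋ →ₗ[ℂ] ℋ) (ℰ : Submodule ℂ ℋ),
      ℰ ≤ Submodule.span ℂ (Set.range f) ∧
      Dense (ℰ : Set ℋ) ∧
      (∀ φ ∈ Submodule.span ℂ (Set.range f), ∀ ψ ∈ Submodule.span ℂ (Set.range f),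
        ⟪T φ, ψ⟫_ℂ = ⟪φ, T ψ⟫_ℂ) ∧
      ∀ ψ ∈ ℰ,
        T ψ ∈ diagDom f (fun j => (ε j)⁻¹) ∧
        diagOp f (fun j => (ε j)⁻¹) ψ ∈ Submodule.span ℂ (Set.range f) ∧
        diagOp f (fun j => (ε j)⁻¹) (T ψ) - T (diagOp f (fun j => (ε j)⁻¹) ψ)
          = -Complex.I • ψ := by

  have hnice : Nice ε := nice_of_hyps hmono hneg hlim hrange
  set lam : ℕ → ℝ := fun j => (ε j)⁻¹ with hlam
  refine ⟨Tmap f hnice, Submodule.span ℂ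
      {ψ : ℋ | ∃ β l l', l ≠ l' ∧ ψ = f (e ε β l) - f (e ε β l')}, ?_, ?_, ?_, ?_⟩
  · rw [Submodule.span_le]
    rintro x ⟨β, l, l', hll, rfl⟩
    exact Submodule.sub_mem _ (Submodule.subset_span ⟨_, rfl⟩)
      (Submodule.subset_span ⟨_, rfl⟩)
  · exact gen_dense f hnice
  · exact fun φ hφ ψ hψ => Tmap_symm f hnice φ ψ hφ hψ
  · intro ψ hψ
    have P : Q f lam ψ ∧ Q f lam (Tmap f hnice ψ) ∧
        diagOp f lam ψ ∈ Submodule.span ℂ (Set.range f) ∧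
        (diagOp f lam (Tmap f hnice ψ) - Tmap f hnice (diagOp f lam ψ) = -Complex.I • ψ) := by
      induction hψ using Submodule.span_induction with
      | mem x hx =>
        obtain ⟨β, l, l', hll, rfl⟩ := hx
        have hQ : Q f lam (f (e ε β l) - f (e ε β l')) :=
          Q_sub f (Q_basis f lam _) (Q_basis f lam _)
        have hT : Tmap f hnice (f (e ε β l) - f (e ε β l'))
            = gv f hnice (e ε β l) - gv f hnice (e ε β l') := by
          rw [map_sub, Tmap_apply, Tmap_apply]
        have hQT : Q f lam (Tmap f hnice (f (e ε β l) - f (e ε β l'))) := by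
          rw [hT]; exact Q_gv_sub f hnice hll
        have hdiag : diagOp f lam (f (e ε β l) - f (e ε β l'))
            = ((lam (e ε β l) : ℝ):ℂ) • f (e ε β l)
              - ((lam (e ε β l') : ℝ):ℂ) • f (e ε β l') := by
          rw [diagOp_sub f lam (Q_basis f lam _) (Q_basis f lam _), diagOp_single, diagOp_single]
        refine ⟨hQ, hQT, ?_, base_identity f hnice hll⟩
        rw [hdiag]
        exact Submodule.sub_mem _
          (Submodule.smul_mem _ _ (Submodule.subset_span ⟨_, rfl⟩))
          (Submodule.smul_mem _ _ (Submodule.subset_span ⟨_, rfl⟩))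
      | zero =>
        refine ⟨Q_zero f lam, by rw [map_zero]; exact Q_zero f lam, ?_, ?_⟩
        · rw [diagOp_zero]; exact Submodule.zero_mem _
        · rw [map_zero, diagOp_zero, map_zero, smul_zero, sub_zero]
      | add x y hx hy ihx ihy =>
        obtain ⟨hxQ, hxQT, hxS, hxI⟩ := ihx
        obtain ⟨hyQ, hyQT, hyS, hyI⟩ := ihy
        refine ⟨Q_add f hxQ hyQ, ?_, ?_, ?_⟩
        · rw [map_add]; exact Q_add f hxQT hyQT
        · rw [diagOp_add f lam hxQ hyQ]; exact Submodule.add_mem _ hxS hyS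
        · have e1 : diagOp f lam (Tmap f hnice (x + y))
              = diagOp f lam (Tmap f hnice x) + diagOp f lam (Tmap f hnice y) := by
            rw [map_add, diagOp_add f lam hxQT hyQT]
          have e2 : Tmap f hnice (diagOp f lam (x + y))
              = Tmap f hnice (diagOp f lam x) + Tmap f hnice (diagOp f lam y) := by
            rw [diagOp_add f lam hxQ hyQ, map_add]
          rw [e1, e2, smul_add, ← hxI, ← hyI]
          abel
      | smul c x hx ihx =>
        obtain ⟨hxQ, hxQT, hxS, hxI⟩ := ihx
        refine ⟨Q_smul f c hxQ, ?_, ?_, ?_⟩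
        · rw [map_smul]; exact Q_smul f c hxQT
        · rw [diagOp_smul f lam c hxQ]; exact Submodule.smul_mem _ _ hxS
        · have e1 : diagOp f lam (Tmap f hnice (c • x))
              = c • diagOp f lam (Tmap f hnice x) := by
            rw [map_smul, diagOp_smul f lam c hxQT]
          have e2 : Tmap f hnice (diagOp f lam (c • x))
              = c • Tmap f hnice (diagOp f lam x) := by
            rw [diagOp_smul f lam c hxQ, map_smul]
          rw [e1, e2, ← smul_sub, hxI, smul_comm]
    exact ⟨Q_iff_diagDom f lam _ P.2.1, P.2.2.1, P.2.2.2⟩
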